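/- arXiv:alg-geom/9606009 — 9 statements merged into one kernel-verified Lean document; each statement's English description precedes it below -/
import Mathlib

section
/- The following conditions are equivalent: (1) the canonical map V → lim_{A ~ V⁺} V/A is bijective (V is complete); (2) the canonical map V⁺ → lim_{A ~ V⁺} V⁺/(A ∩ V⁺) is bijective (V⁺ is complete); (3) for every subspace B commensurable with V⁺, the canonical map B → lim_{A ~ V⁺} B/(A ∩ B) is bijective (every subspace commensurable with V⁺ is complete). -/
open Submodule

/-- Two subspaces `A`, `B` of a `k`-vector space `V` are *commensurable* if the quotient
`(A + B)/(A ∩ B)` is a finite-dimensional `k`-vector space. -/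
def IsCommensurable {k V : Type*} [Field k] [AddCommGroup V] [Module k V]
    (A B : Submodule k V) : Prop :=
  FiniteDimensional k (↥(A ⊔ B) ⧸ Submodule.comap (A ⊔ B).subtype (A ⊓ B))

/-- A subspace `W ⊆ V` is *complete* (w.r.t. the `V⁺`-topology) if the canonical map from `W`
to the inverse limit `lim_{A ~ V⁺} W/(W ∩ A)` — realized as the subspace of the product
`Π_{A ~ V⁺} W/(W ∩ A)` of families compatible under the natural projections — is bijective. -/
def IsCompleteSubspace {k V : Type*} [Field k] [AddCommGroup V] [Module k V]
    (Vplus W : Submodule k V) : Prop :=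
  Function.Bijective (fun w : W =>
    (⟨fun A : {A : Submodule k V // IsCommensurable A Vplus} =>
        Submodule.Quotient.mk (p := comap W.subtype A.1) w,
      fun A A' h => by simp [Submodule.mapQ_apply]⟩ :
      {x : ∀ A : {A : Submodule k V // IsCommensurable A Vplus}, ↥W ⧸ comap W.subtype A.1 //
        ∀ (A A' : {A : Submodule k V // IsCommensurable A Vplus}) (h : A.1 ≤ A'.1),
          Submodule.mapQ (comap W.subtype A.1) (comap W.subtype A'.1) LinearMap.id
            (fun _ hw => h hw) (x A) = x A'}))

/-!
Completeness of `W` splits into separatedness, i.e. `W` meets `⋂_{A ~ V⁺} A` trivially, and the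
existence of limits of compatible families. That intersection lies in every `B ~ V⁺`, so
separatedness means the same for `V` and for each such `B`. A limit in `V` of a compatible family
in `B` lies in `B`, as it differs from the `B`-th term by an element of `B`. Conversely, a
compatible family `(u_A)` in `V` is moved into `V⁺` by `A ↦ u_{A ∩ V⁺} - u_{V⁺}`, which makes
sense because `A ∩ V⁺ ~ V⁺`.
-/

section

variable {k V : Type*} [Field k] [AddCommGroup V] [Module k V]

theorem isCommensurable_refl (A : Submodule k V) : IsCommensurable A A := by
  have : comap (A ⊔ A).subtype (A ⊓ A) = ⊤ := by simp
  unfold IsCommensurable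
  rw [this]
  infer_instance

theorem IsCommensurable.inf {A B : Submodule k V} (h : IsCommensurable A B) :
    IsCommensurable (A ⊓ B) B := by
  have hle : A ⊓ B ⊔ B ≤ A ⊔ B := sup_le (inf_le_left.trans le_sup_left) le_sup_right
  have hker : comap (A ⊓ B ⊔ B).subtype (A ⊓ B ⊓ B) =
      comap (inclusion hle) (comap (A ⊔ B).subtype (A ⊓ B)) := by
    ext ⟨x, hx⟩
    rw [sup_eq_right.mpr (inf_le_right : A ⊓ B ≤ B)] at hx
    simp [hx]
  unfold IsCommensurable at h ⊢
  refine Module.Finite.of_injective (mapQ _ _ (inclusion hle) hker.le) ?_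
  rw [← LinearMap.ker_eq_bot, ker_mapQ, hker, mkQ_map_self]

variable (Vplus W : Submodule k V)

abbrev CommensurableWith : Type _ := {A : Submodule k V // IsCommensurable A Vplus}

def commensurableCore : Submodule k V := ⨅ A : CommensurableWith Vplus, A.1

def HasLimitsOfCompatibleFamilies : Prop :=
  ∀ u : CommensurableWith Vplus → V, (∀ A, u A ∈ W) →
    (∀ A A' : CommensurableWith Vplus, A.1 ≤ A'.1 → u A - u A' ∈ A'.1) →
      ∃ w ∈ W, ∀ A, w - u A ∈ A.1

theorem isCompleteSubspace_iff : IsCompleteSubspace Vplus W ↔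
    Disjoint W (commensurableCore Vplus) ∧ HasLimitsOfCompatibleFamilies Vplus W := by
  have mk_eq_mk (A : CommensurableWith Vplus) (w w' : W) :
      Submodule.Quotient.mk (p := comap W.subtype A.1) w = Submodule.Quotient.mk w' ↔
        (w : V) - w' ∈ A.1 := by
    simp [Submodule.Quotient.eq]
  simp only [disjoint_def, commensurableCore, mem_iInf]
  refine and_congr ⟨fun hinj w hw hcore => ?_, fun hsep w w' h => ?_⟩
    ⟨fun hsurj u huW hu => ?_, fun hlim ⟨x, hx⟩ => ?_⟩
  · have := hinj (a₁ := ⟨w, hw⟩) (a₂ := 0)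
      (Subtype.ext (funext fun A => (mk_eq_mk A _ _).2 (by simpa using hcore A)))
    simpa using congrArg Subtype.val this
  · have hA A := (mk_eq_mk A w w').1 (congrFun (congrArg Subtype.val h) A)
    exact Subtype.ext (sub_eq_zero.1 (hsep _ (sub_mem w.2 w'.2) hA))
  · obtain ⟨w, hw⟩ := hsurj ⟨fun A => Submodule.Quotient.mk ⟨u A, huW A⟩,
      fun A A' h => (mk_eq_mk A' _ _).2 (hu A A' h)⟩
    exact ⟨w, w.2, fun A => (mk_eq_mk A _ _).1 (congrFun (congrArg Subtype.val hw) A)⟩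
  · choose u hu using fun A => Submodule.Quotient.mk_surjective _ (x A)
    have hcompat A A' (h : A.1 ≤ A'.1) : ((u A : V) - u A') ∈ A'.1 := by
      rw [← mk_eq_mk, hu A', ← hx A A' h, ← hu A]
      rfl
    obtain ⟨w, hwW, hw⟩ := hlim (fun A => u A) (fun A => (u A).2) hcompat
    exact ⟨⟨w, hwW⟩, Subtype.ext (funext fun A => ((mk_eq_mk A _ _).2 (hw A)).trans (hu A))⟩

variable {Vplus W}

theorem commensurableCore_le {B : Submodule k V} (hB : IsCommensurable B Vplus) :
    commensurableCore Vplus ≤ B :=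
  iInf_le (fun A : CommensurableWith Vplus => A.1) ⟨B, hB⟩

theorem disjoint_commensurableCore_iff {B : Submodule k V} (hB : IsCommensurable B Vplus) :
    Disjoint B (commensurableCore Vplus) ↔ commensurableCore Vplus = ⊥ :=
  ⟨fun h => h.symm.eq_bot_of_le (commensurableCore_le hB), fun h => h ▸ disjoint_bot_right⟩

theorem HasLimitsOfCompatibleFamilies.of_top (h : HasLimitsOfCompatibleFamilies Vplus ⊤)
    {B : Submodule k V} (hB : IsCommensurable B Vplus) : HasLimitsOfCompatibleFamilies Vplus B := by
  intro u huB hu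
  obtain ⟨w, -, hw⟩ := h u (fun _ => trivial) hu
  refine ⟨w, ?_, hw⟩
  simpa using B.add_mem (hw ⟨B, hB⟩) (huB ⟨B, hB⟩)

theorem HasLimitsOfCompatibleFamilies.top_of_self
    (h : HasLimitsOfCompatibleFamilies Vplus Vplus) : HasLimitsOfCompatibleFamilies Vplus ⊤ := by
  intro u _ hu
  let P : CommensurableWith Vplus := ⟨Vplus, isCommensurable_refl Vplus⟩
  let F (A : CommensurableWith Vplus) : CommensurableWith Vplus := ⟨A.1 ⊓ Vplus, A.2.inf⟩
  obtain ⟨w, -, hw⟩ := h (fun A => u (F A) - u P) (fun A => hu (F A) P inf_le_right)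
    fun A A' hAA' => by simpa using (hu (F A) (F A') (inf_le_inf_right _ hAA')).1
  refine ⟨w + u P, trivial, fun A => ?_⟩
  convert A.1.add_mem (hw A) (hu (F A) A inf_le_left) using 1
  abel

theorem IsCompleteSubspace.of_top (h : IsCompleteSubspace Vplus ⊤) {B : Submodule k V}
    (hB : IsCommensurable B Vplus) : IsCompleteSubspace Vplus B := by
  rw [isCompleteSubspace_iff, top_disjoint] at h
  rw [isCompleteSubspace_iff, disjoint_commensurableCore_iff hB]
  exact ⟨h.1, h.2.of_top hB⟩

theorem IsCompleteSubspace.top_of_self (h : IsCompleteSubspace Vplus Vplus) :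
    IsCompleteSubspace Vplus ⊤ := by
  rw [isCompleteSubspace_iff, disjoint_commensurableCore_iff (isCommensurable_refl Vplus)] at h
  rw [isCompleteSubspace_iff, top_disjoint]
  exact ⟨h.1, h.2.top_of_self⟩

end

/-- The following are equivalent: (1) `V` is complete; (2) `V⁺` is complete; (3) every
subspace commensurable with `V⁺` is complete. -/
theorem isCompleteSubspace_tfae {k V : Type*} [Field k] [AddCommGroup V] [Module k V]
    (Vplus : Submodule k V) :
    (IsCompleteSubspace Vplus (⊤ : Submodule k V) ↔ IsCompleteSubspace Vplus Vplus) ∧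
    (IsCompleteSubspace Vplus (⊤ : Submodule k V) ↔
      ∀ B : Submodule k V, IsCommensurable B Vplus → IsCompleteSubspace Vplus B) := by
  have hself := isCommensurable_refl Vplus
  exact ⟨⟨fun h => h.of_top hself, .top_of_self⟩,
    ⟨fun h _ hB => h.of_top hB, fun h => (h Vplus hself).top_of_self⟩⟩
end

section
/- For every subspace B of V commensurable with V⁺, the canonical map V/B → lim_{A ~ V⁺} V/(A + B) is bijective; that is, the quotient V/B is already complete (and discrete) in the topology induced from the V⁺-topology. -/
/-!
The index `B` itself is commensurable with `V⁺`, and at that index the projection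
`V/B → V/(B + B)` is an isomorphism; this gives injectivity. For surjectivity, given a compatible
family `x`, take `v ∈ V/B` with image `x B`. Commensurability with `V⁺` is stable under sums, so
`A + B` is again an index, and compatibility at `A + B` identifies `x A` with the image of `v`,
because `V/(A + B) → V/((A + B) + B)` is again an isomorphism.
-/

open Submodule

namespace Submodule

variable {R M : Type*} [Ring R] [AddCommGroup M] [Module R M]

theorem factor_injective {p p' : Submodule R M} (H : p ≤ p') (H' : p' ≤ p) :
    Function.Injective (factor H) := by
  rintro ⟨x⟩ ⟨y⟩ h
  exact (Quotient.eq p).2 (H' ((Quotient.eq p').1 h))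

theorem finite_quotient_comap_subtype_iff (p q : Submodule R M) :
    Module.Finite R (p ⧸ comap p.subtype q) ↔ Module.Finite R (p.map q.mkQ) := by
  have e := (q.mkQ.comp p.subtype).quotKerEquivRange
  rw [LinearMap.ker_comp, ker_mkQ, LinearMap.range_comp, range_subtype] at e
  exact ⟨fun _ => Module.Finite.equiv e, fun _ => Module.Finite.equiv e.symm⟩

theorem finiteDimensional_map_mkQ_mono {k V : Type*} [DivisionRing k] [AddCommGroup V]
    [Module k V] {N N' p p' : Submodule k V} (hN : N ≤ N') (hp : p ≤ p')
    [FiniteDimensional k (N'.map p.mkQ)] : FiniteDimensional k (N.map p'.mkQ) := by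
  have : FiniteDimensional k (N'.map p'.mkQ) := by
    rw [← factor_comp_mk hp, map_comp]
    infer_instance
  exact finiteDimensional_of_le (map_mono hN)

end Submodule

section Commensurable

variable {k V : Type*} [Field k] [AddCommGroup V] [Module k V]

theorem isCommensurable_iff (A B : Submodule k V) :
    IsCommensurable A B ↔ FiniteDimensional k ((A ⊔ B).map (A ⊓ B).mkQ) :=
  finite_quotient_comap_subtype_iff _ _

theorem IsCommensurable.sup {A B W : Submodule k V}
    (hA : IsCommensurable A W) (hB : IsCommensurable B W) : IsCommensurable (A ⊔ B) W := by
  rw [isCommensurable_iff] at hA hB ⊢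
  -- Modulo `D = A ∩ W + B ∩ W ≤ (A + B) ∩ W`, the images of `A + W` and `B + W` are
  -- finite-dimensional and together contain that of `A + B + W`.
  set D := A ⊓ W ⊔ B ⊓ W
  have hAD : FiniteDimensional k ((A ⊔ W).map D.mkQ) :=
    finiteDimensional_map_mkQ_mono le_rfl le_sup_left
  have hBD : FiniteDimensional k ((B ⊔ W).map D.mkQ) :=
    finiteDimensional_map_mkQ_mono le_rfl le_sup_right
  have hle : A ⊔ B ⊔ W ≤ A ⊔ W ⊔ (B ⊔ W) := by
    rw [sup_sup_sup_comm, sup_idem]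
  have : FiniteDimensional k ((A ⊔ B ⊔ W).map D.mkQ) :=
    finiteDimensional_of_le ((map_mono hle).trans (Submodule.map_sup _ _ _).le)
  exact finiteDimensional_map_mkQ_mono le_rfl
    (sup_le (inf_le_inf_right W le_sup_left) (inf_le_inf_right W le_sup_right))

end Commensurable

/-- For every subspace `B` commensurable with `V⁺`, the canonical map
`V/B → lim_{A ~ V⁺} V/(A + B)` — the inverse limit being realized as the subspace of the
product `Π_{A ~ V⁺} V/(A + B)` of families compatible under the natural projections — is
bijective: the quotient `V/B` is already complete. -/
theorem bijective_quotient_to_invLim {k V : Type*} [Field k] [AddCommGroup V] [Module k V]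
    (Vplus B : Submodule k V) (hB : IsCommensurable B Vplus) :
    Function.Bijective (fun v : V ⧸ B =>
      (⟨fun A : {A : Submodule k V // IsCommensurable A Vplus} =>
          Submodule.mapQ B (A.1 ⊔ B) LinearMap.id
            (fun x hx => (le_sup_right : B ≤ A.1 ⊔ B) hx) v,
        by
          obtain ⟨w, rfl⟩ := Submodule.Quotient.mk_surjective B v
          intro A A' h
          simp [Submodule.mapQ_apply]⟩ :
        {x : ∀ A : {A : Submodule k V // IsCommensurable A Vplus}, V ⧸ (A.1 ⊔ B) //
          ∀ (A A' : {A : Submodule k V // IsCommensurable A Vplus}) (h : A.1 ≤ A'.1),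
            Submodule.mapQ (A.1 ⊔ B) (A'.1 ⊔ B) LinearMap.id
              (fun x hx => sup_le_sup_right h B hx) (x A) = x A'})) := by
  let B' : {A : Submodule k V // IsCommensurable A Vplus} := ⟨B, hB⟩
  constructor
  · intro v w h
    exact factor_injective le_sup_right (sup_idem B).le (congrFun (congrArg Subtype.val h) B')
  · rintro ⟨x, hx⟩
    obtain ⟨v, hv⟩ := factor_surjective (le_sup_right : B ≤ B ⊔ B) (x B')
    refine ⟨v, Subtype.ext (funext fun A => ?_)⟩
    let AB : {A : Submodule k V // IsCommensurable A Vplus} := ⟨A.1 ⊔ B, A.2.sup hB⟩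
    apply factor_injective (le_sup_left : A.1 ⊔ B ≤ AB.1 ⊔ B) (sup_le le_rfl le_sup_right)
    change factor _ (factor _ v) = factor _ (x A)
    rw [hx A AB le_sup_left, ← hx B' AB le_sup_right, ← hv, factor_comp_apply, factor_comp_apply]
end

section
/- Let A and B be subspaces of a k-vector space V. There exists a subspace L ⊆ V with L ⊕ A = V and L ⊕ B = V (i.e. L ∩ A = 0, L + A = V, L ∩ B = 0, L + B = V) if and only if there exists a k-linear isomorphism B/(A ∩ B) ≅ A/(A ∩ B). -/
/-!
If `L` is a common complement of `A` and `B`, projecting `B` onto `A` along `L` is an isomorphism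
`B ≃ A` fixing `A ⊓ B` pointwise, so it descends to the quotients by `A ⊓ B`.

Conversely, lift `e : B/(A ⊓ B) ≃ A/(A ⊓ B)` along linear sections `t`, `s` of the two quotient
maps. The graph `{t q + s (e q)}` is a common complement of `A` and `B` inside `A ⊔ B`: modulo `A`
it is the image of `t`, a complement of `A ⊓ B` in `B`, and symmetrically modulo `B`. Adding a
complement of `A ⊔ B` gives a common complement in `V`, by modularity of the subspace lattice.
-/

open Submodule LinearMap

theorem isCompl_sup_of_disjoint_of_sup_eq {α : Type*} [Lattice α] [BoundedOrder α]
    [IsModularLattice α] {a l w m : α} (hal : Disjoint a l) (hw : a ⊔ l = w) (hm : IsCompl w m) :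
    IsCompl a (l ⊔ m) :=
  ⟨hal.disjoint_sup_right_of_disjoint_sup_left (hw ▸ hm.disjoint),
    codisjoint_iff.2 (by rw [← sup_assoc, hw, hm.sup_eq_top])⟩

namespace Submodule

section Ring

variable {R V Q : Type*} [Ring R] [AddCommGroup V] [Module R V] [AddCommGroup Q] [Module R Q]

theorem range_subtype_comp_le (p : Submodule R V) (f : Q →ₗ[R] p) : range (p.subtype ∘ₗ f) ≤ p := by
  rintro _ ⟨q, rfl⟩
  exact (f q).2

theorem sup_range_add_of_range_le {A : Submodule R V} {α : Q →ₗ[R] V} (hα : range α ≤ A)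
    (β : Q →ₗ[R] V) : A ⊔ range (β + α) = A ⊔ range β := by
  have hαA : A.mkQ ∘ₗ α = 0 := by rwa [← range_le_ker_iff, ker_mkQ]
  rw [← comap_map_mkQ, ← comap_map_mkQ A (range β), ← range_comp, ← range_comp, comp_add, hαA,
    add_zero]

theorem disjoint_range_subtype_comp_add {A B : Submodule R V} {N : Submodule R B}
    (hN : comap B.subtype A ≤ N) {t : Q →ₗ[R] B} (ht : Function.Injective (N.mkQ ∘ₗ t))
    {α : Q →ₗ[R] V} (hα : range α ≤ A) : Disjoint A (range (B.subtype ∘ₗ t + α)) := by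
  rw [disjoint_def]
  rintro _ hv ⟨q, rfl⟩
  have htA : (t q : V) ∈ A := by
    simpa using sub_mem hv (hα (mem_range_self α q))
  have hq : q = 0 := ht (by simpa [Quotient.mk_eq_zero] using hN htA)
  simp [hq]

theorem sup_range_subtype_comp_add {A B : Submodule R V} {N : Submodule R B}
    (hN : N ≤ comap B.subtype A) {t : Q →ₗ[R] B} (ht : Function.Surjective (N.mkQ ∘ₗ t))
    {α : Q →ₗ[R] V} (hα : range α ≤ A) : A ⊔ range (B.subtype ∘ₗ t + α) = A ⊔ B := by
  rw [sup_range_add_of_range_le hα]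
  refine le_antisymm (sup_le_sup_left (range_subtype_comp_le B t) _) (sup_le le_sup_left ?_)
  intro b hb
  obtain ⟨q, hq⟩ := ht (N.mkQ ⟨b, hb⟩)
  have hbA : b - t q ∈ A := hN <| (Quotient.eq N).1 hq.symm
  simpa using add_mem (mem_sup_left hbA) (mem_sup_right (mem_range_self (B.subtype ∘ₗ t) q))

theorem exists_linearEquiv_sub_mem {L A B : Submodule R V} (hA : IsCompl L A) (hB : IsCompl L B) :
    ∃ e : B ≃ₗ[R] A, ∀ b : B, (e b : V) - b ∈ L :=
  ⟨(quotientEquivOfIsCompl L B hB).symm.trans (quotientEquivOfIsCompl L A hA), fun b =>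
    (Quotient.eq L).1 (mk_quotientEquivOfIsCompl_apply hA (Quotient.mk b))⟩

theorem coe_apply_eq_self_of_mem {L A B : Submodule R V} (hLA : Disjoint L A) (f : B → A)
    (hf : ∀ b : B, (f b : V) - b ∈ L) {b : B} (hb : (b : V) ∈ A) : (f b : V) = b :=
  sub_eq_zero.1 <| disjoint_def.1 hLA _ (hf b) (sub_mem (f b).2 hb)

theorem map_comap_subtype_inf_eq {L A B : Submodule R V} (hLA : Disjoint L A)
    (hLB : Disjoint L B) (e : B ≃ₗ[R] A) (he : ∀ b : B, (e b : V) - b ∈ L) :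
    (comap B.subtype (A ⊓ B)).map (e : B →ₗ[R] A) = comap A.subtype (A ⊓ B) := by
  have he' : ∀ a : A, (e.symm a : V) - a ∈ L := fun a => by
    simpa using L.neg_mem (he (e.symm a))
  refine le_antisymm ?_ fun a ha => ⟨e.symm a, ?_, e.apply_symm_apply a⟩
  · rintro _ ⟨b, hb, rfl⟩
    change (e b : V) ∈ A ⊓ B
    rwa [coe_apply_eq_self_of_mem hLA e he hb.1]
  · change (e.symm a : V) ∈ A ⊓ B
    rwa [coe_apply_eq_self_of_mem hLB e.symm he' ha.2]

theorem nonempty_quotientEquiv_of_isCompl {L A B : Submodule R V} (hA : IsCompl L A)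
    (hB : IsCompl L B) :
    Nonempty ((B ⧸ comap B.subtype (A ⊓ B)) ≃ₗ[R] (A ⧸ comap A.subtype (A ⊓ B))) :=
  let ⟨e, he⟩ := exists_linearEquiv_sub_mem hA hB
  ⟨Quotient.equiv _ _ e (map_comap_subtype_inf_eq hA.disjoint hB.disjoint e he)⟩

end Ring

theorem exists_isCompl_isCompl_of_quotientEquiv {K V : Type*} [DivisionRing K] [AddCommGroup V]
    [Module K V] {A B : Submodule K V}
    (e : (B ⧸ comap B.subtype (A ⊓ B)) ≃ₗ[K] (A ⧸ comap A.subtype (A ⊓ B))) :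
    ∃ L : Submodule K V, IsCompl L A ∧ IsCompl L B := by
  obtain ⟨t, ht⟩ := (comap B.subtype (A ⊓ B)).mkQ.exists_rightInverse_of_surjective (range_mkQ _)
  obtain ⟨s, hs⟩ := (comap A.subtype (A ⊓ B)).mkQ.exists_rightInverse_of_surjective (range_mkQ _)
  obtain ⟨M, hM⟩ := (A ⊔ B).exists_isCompl
  have hmt : Function.Bijective ((comap B.subtype (A ⊓ B)).mkQ ∘ₗ t) := by
    rw [ht]
    exact Function.bijective_id
  have hmu : Function.Bijective ((comap A.subtype (A ⊓ B)).mkQ ∘ₗ (s ∘ₗ e.toLinearMap)) := by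
    rw [← comp_assoc, hs, id_comp]
    exact e.bijective
  have hA : IsCompl A (range (B.subtype ∘ₗ t + A.subtype ∘ₗ s ∘ₗ e.toLinearMap) ⊔ M) :=
    isCompl_sup_of_disjoint_of_sup_eq
      (disjoint_range_subtype_comp_add (N := comap B.subtype (A ⊓ B)) (fun b hb => ⟨hb, b.2⟩)
        hmt.1 (range_subtype_comp_le A _))
      (sup_range_subtype_comp_add (comap_mono inf_le_left) hmt.2 (range_subtype_comp_le A _)) hM
  have hB : IsCompl B (range (A.subtype ∘ₗ s ∘ₗ e.toLinearMap + B.subtype ∘ₗ t) ⊔ M) :=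
    isCompl_sup_of_disjoint_of_sup_eq
      (disjoint_range_subtype_comp_add (N := comap A.subtype (A ⊓ B)) (fun a ha => ⟨a.2, ha⟩)
        hmu.1 (range_subtype_comp_le B t))
      ((sup_range_subtype_comp_add (comap_mono inf_le_right) hmu.2
        (range_subtype_comp_le B t)).trans (sup_comm B A)) hM
  rw [add_comm] at hB
  exact ⟨_, hA.symm, hB.symm⟩

end Submodule

/-- For subspaces `A`, `B` of a `k`-vector space `V`, there exists a subspace `L` which is
simultaneously a complement of `A` and of `B` (`L ∩ A = 0`, `L + A = V`, `L ∩ B = 0`,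
`L + B = V`) if and only if there is a `k`-linear isomorphism `B/(A ∩ B) ≅ A/(A ∩ B)`. -/
theorem exists_common_complement_iff {k V : Type*} [Field k] [AddCommGroup V] [Module k V]
    (A B : Submodule k V) :
    (∃ L : Submodule k V, L ⊓ A = ⊥ ∧ L ⊔ A = ⊤ ∧ L ⊓ B = ⊥ ∧ L ⊔ B = ⊤) ↔
    Nonempty ((↥B ⧸ Submodule.comap B.subtype (A ⊓ B)) ≃ₗ[k]
      (↥A ⧸ Submodule.comap A.subtype (A ⊓ B))) := by
  constructor
  · rintro ⟨L, hLA, hLA', hLB, hLB'⟩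
    exact nonempty_quotientEquiv_of_isCompl (.of_eq hLA hLA') (.of_eq hLB hLB')
  · rintro ⟨e⟩
    obtain ⟨L, hLA, hLB⟩ := exists_isCompl_isCompl_of_quotientEquiv e
    exact ⟨L, hLA.inf_eq_bot, hLA.sup_eq_top, hLB.inf_eq_bot, hLB.sup_eq_top⟩
end

section
/- If L ⊆ L' are two discrete subspaces of V (with respect to V⁺), then the quotient L'/L is a finite-dimensional k-vector space. -/
/-- A subspace `L ⊆ V` is *discrete* (w.r.t. `V⁺`) if `L ∩ V⁺` and `V/(L + V⁺)` are
finite-dimensional over `k`. -/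
def IsDiscreteSubspace {k V : Type*} [Field k] [AddCommGroup V] [Module k V]
    (Vplus L : Submodule k V) : Prop :=
  FiniteDimensional k ↥(L ⊓ Vplus) ∧ FiniteDimensional k (V ⧸ (L ⊔ Vplus))

/-!
Map `L'` to `V/(L + V⁺)`. Its kernel is `L' ∩ (L + V⁺) = L + (L' ∩ V⁺)` by the modular law,
so `L'/(L + (L' ∩ V⁺))` embeds in the finite-dimensional space `V/(L + V⁺)`, while
`(L + (L' ∩ V⁺))/L` is a quotient of the finite-dimensional space `L' ∩ V⁺`.
-/

namespace Submodule

section Ring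

variable {R M : Type*} [Ring R] [AddCommGroup M] [Module R M]

theorem comap_subtype_sup_of_le {p q : Submodule R M} (r : Submodule R M) (hqp : q ≤ p) :
    comap p.subtype (q ⊔ r) = comap p.subtype q ⊔ comap p.subtype (p ⊓ r) := by
  have hcomap_inf : ∀ s : Submodule R M, comap p.subtype (p ⊓ s) = comap p.subtype s := by
    simp [comap_inf]
  rw [← hcomap_inf, inf_comm, sup_inf_assoc_of_le r hqp, inf_comm r,
    comap_sup_of_injective p.injective_subtype (by simpa using hqp) (by simp)]

theorem finite_quotient_of_finite_quotient_sup {W : Submodule R M} (X : Submodule R M)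
    [Module.Finite R X] [Module.Finite R (M ⧸ (W ⊔ X))] : Module.Finite R (M ⧸ W) :=
  have : Module.Finite R ((M ⧸ W) ⧸ X.map W.mkQ) :=
    .equiv (quotientQuotientEquivQuotientSup W X).symm
  .of_submodule_quotient (X.map W.mkQ)

end Ring

section DivisionRing

variable {k M : Type*} [DivisionRing k] [AddCommGroup M] [Module k M]

theorem mapQ_comap_subtype_injective (p q : Submodule k M) :
    Function.Injective (mapQ (comap p.subtype q) q p.subtype le_rfl) := by
  rw [← LinearMap.ker_eq_bot, ker_mapQ, mkQ_map_self]

theorem finiteDimensional_quotient_comap_subtype (p q : Submodule k M)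
    [FiniteDimensional k (M ⧸ q)] : FiniteDimensional k (p ⧸ comap p.subtype q) :=
  .of_injective _ (mapQ_comap_subtype_injective p q)

end DivisionRing

end Submodule

/-- If `L ⊆ L'` are discrete subspaces of `V` (w.r.t. `V⁺`), then the quotient `L'/L` is a
finite-dimensional `k`-vector space. -/
theorem finiteDimensional_quotient_of_discrete {k V : Type*} [Field k] [AddCommGroup V]
    [Module k V] (Vplus L L' : Submodule k V)
    (hL : IsDiscreteSubspace Vplus L) (hL' : IsDiscreteSubspace Vplus L') (hLL' : L ≤ L') :
    FiniteDimensional k (↥L' ⧸ Submodule.comap L'.subtype L) := by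
  obtain ⟨-, hcodim⟩ := hL
  obtain ⟨hfinite, -⟩ := hL'
  have : FiniteDimensional k
      (L' ⧸ (L.comap L'.subtype ⊔ (L' ⊓ Vplus).comap L'.subtype)) := by
    rw [← Submodule.comap_subtype_sup_of_le Vplus hLL']
    exact Submodule.finiteDimensional_quotient_comap_subtype L' _
  have : FiniteDimensional k ((L' ⊓ Vplus).comap L'.subtype) :=
    .equiv (Submodule.comapSubtypeEquivOfLe inf_le_left).symm
  exact Submodule.finite_quotient_of_finite_quotient_sup ((L' ⊓ Vplus).comap L'.subtype)
end

section
/- Let L ⊆ L' be discrete subspaces of V (with respect to V⁺) and let M be a subspace with L ⊆ M ⊆ L'. Then M is discrete and its index satisfies i(M) = i(L') − dim_k(L'/M), where for a discrete subspace W the index is i(W) := dim_k(W ∩ V⁺) − dim_k(V/(W + V⁺)). (This is the behaviour of the index of the infinite Grassmannian under the closed immersion j : Gr(L'/L) ↪ Gr(V), j(M̄) = π⁻¹(M̄), evaluated at rational points.) -/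
/-- The index of a (discrete) subspace `W`: `i(W) = dim_k(W ∩ V⁺) − dim_k(V/(W + V⁺))`. -/
noncomputable def grIndex {k V : Type*} [Field k] [AddCommGroup V] [Module k V]
    (Vplus W : Submodule k V) : ℤ :=
  (Module.finrank k ↥(W ⊓ Vplus) : ℤ) - (Module.finrank k (V ⧸ (W ⊔ Vplus)) : ℤ)

/-!
For `M ≤ L'` there is an exact sequence
`0 → M ∩ V⁺ → L' ∩ V⁺ → L'/M → V/(M + V⁺) → V/(L' + V⁺) → 0`,
whose outer four terms are finite-dimensional when `M` and `L'` are discrete. Hence so is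
`L'/M`, and the alternating sum of the dimensions vanishes, which is the index formula.
-/

open Module Function Submodule

section Exact

variable {k K E B C D : Type*} [DivisionRing k]
  [AddCommGroup K] [Module k K] [AddCommGroup E] [Module k E] [AddCommGroup B] [Module k B]
  [AddCommGroup C] [Module k C] [AddCommGroup D] [Module k D]

theorem FiniteDimensional.of_exact {α : E →ₗ[k] B} {θ : B →ₗ[k] C} (h : Exact α θ)
    [FiniteDimensional k E] [FiniteDimensional k C] : FiniteDimensional k B := by
  refine Module.finite_def.mpr (fg_of_fg_map_of_fg_inf_ker θ ?_ ?_)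
  · rw [Submodule.map_top]
    exact Module.Finite.iff_fg.mp inferInstance
  · rw [top_inf_eq, h.linearMap_ker_eq]
    exact Module.Finite.iff_fg.mp inferInstance

theorem finrank_add_finrank_add_finrank_eq_of_exact
    {ι : K →ₗ[k] E} {α : E →ₗ[k] B} {θ : B →ₗ[k] C} {β : C →ₗ[k] D}
    (hι : Injective ι) (hια : Exact ι α) (hαθ : Exact α θ) (hθβ : Exact θ β)
    (hβ : Surjective β) [FiniteDimensional k E] [FiniteDimensional k C] :
    finrank k K + finrank k B + finrank k D = finrank k E + finrank k C := by
  have := FiniteDimensional.of_exact hαθ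
  have hE := α.finrank_range_add_finrank_ker
  have hB := θ.finrank_range_add_finrank_ker
  have hC := β.finrank_range_add_finrank_ker
  rw [hια.linearMap_ker_eq, LinearMap.finrank_range_of_inj hι] at hE
  rw [hαθ.linearMap_ker_eq] at hB
  rw [hθβ.linearMap_ker_eq, LinearMap.range_eq_top.mpr hβ, finrank_top] at hC
  omega

end Exact

section SubspaceSequence

variable {k V : Type*} [Ring k] [AddCommGroup V] [Module k V] {P M L : Submodule k V}

theorem exact_inclusion_inf_mkQ_comp_inclusion (h : M ≤ L) :
    Exact (inclusion (inf_le_inf_right P h))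
      ((M.comap L.subtype).mkQ ∘ₗ inclusion (inf_le_left : L ⊓ P ≤ L)) := by
  rintro ⟨x, hxL, hxP⟩
  simp only [LinearMap.comp_apply, mkQ_apply, Quotient.mk_eq_zero, mem_comap, subtype_apply,
    coe_inclusion, Set.mem_range]
  constructor
  · intro hxM
    exact ⟨⟨x, hxM, hxP⟩, rfl⟩
  · rintro ⟨y, hy⟩
    have hyx : (y : V) = x := congrArg Subtype.val hy
    exact hyx ▸ y.2.1

theorem exact_mkQ_comp_inclusion_mapQ_subtype (h : M ≤ L) :
    Exact ((M.comap L.subtype).mkQ ∘ₗ inclusion (inf_le_left : L ⊓ P ≤ L))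
      ((M.comap L.subtype).mapQ (M ⊔ P) L.subtype (comap_mono le_sup_left)) := by
  intro y
  induction y using Quotient.induction_on with | _ z => ?_
  simp only [mapQ_apply, subtype_apply, Quotient.mk_eq_zero, LinearMap.comp_apply, mkQ_apply,
    Set.mem_range, Submodule.Quotient.eq, mem_comap]
  constructor
  · intro hz
    obtain ⟨m, hm, p, hp, hmp⟩ := mem_sup.mp hz
    have hpz : p = z - m := by rw [← hmp, add_sub_cancel_left]
    refine ⟨⟨p, ?_, hp⟩, ?_⟩
    · rw [hpz]
      exact L.sub_mem z.2 (h hm)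
    · simpa [hpz] using M.neg_mem hm
  · rintro ⟨x, hx⟩
    rw [← sub_sub_cancel (x : V) z]
    exact sub_mem (mem_sup_right x.2.2) (mem_sup_left hx)

theorem exact_mapQ_subtype_factor (h : M ≤ L) :
    Exact ((M.comap L.subtype).mapQ (M ⊔ P) L.subtype (comap_mono le_sup_left))
      (factor (sup_le_sup_right h P)) := by
  intro w
  induction w using Quotient.induction_on with | _ v => ?_
  simp only [factor, mapQ_apply, LinearMap.id_apply, Quotient.mk_eq_zero, Set.mem_range]
  constructor
  · intro hv
    obtain ⟨l, hl, p, hp, rfl⟩ := mem_sup.mp hv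
    refine ⟨Submodule.Quotient.mk ⟨l, hl⟩, (Submodule.Quotient.eq _).mpr ?_⟩
    simpa using mem_sup_right (P.neg_mem hp)
  · rintro ⟨y, hy⟩
    induction y using Quotient.induction_on with | _ z => ?_
    rw [mapQ_apply, subtype_apply, Submodule.Quotient.eq] at hy
    rw [← sub_sub_cancel (z : V) v]
    exact sub_mem (mem_sup_left z.2) (sup_le_sup_right h P hy)

end SubspaceSequence

section Discrete

variable {k V : Type*} [Field k] [AddCommGroup V] [Module k V] {P L M L' : Submodule k V}

theorem IsDiscreteSubspace.of_le_of_le (hL : IsDiscreteSubspace P L)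
    (hL' : IsDiscreteSubspace P L') (h₁ : L ≤ M) (h₂ : M ≤ L') : IsDiscreteSubspace P M := by
  have := hL.2
  have := hL'.1
  exact ⟨finiteDimensional_of_le (inf_le_inf_right P h₂),
    Module.Finite.of_surjective _ (factor_surjective (sup_le_sup_right h₁ P))⟩

theorem grIndex_eq_sub_finrank_of_le (hM : IsDiscreteSubspace P M)
    (hL' : IsDiscreteSubspace P L') (h : M ≤ L') :
    grIndex P M = grIndex P L' - (finrank k (L' ⧸ M.comap L'.subtype) : ℤ) := by
  have := hL'.1
  have := hM.2
  have hdim := finrank_add_finrank_add_finrank_eq_of_exact (inclusion_injective _)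
    (exact_inclusion_inf_mkQ_comp_inclusion h) (exact_mkQ_comp_inclusion_mapQ_subtype h)
    (exact_mapQ_subtype_factor h) (factor_surjective (sup_le_sup_right h P))
  unfold grIndex
  omega

end Discrete

/-- If `L ⊆ M ⊆ L'` with `L`, `L'` discrete (w.r.t. `V⁺`), then `M` is discrete and
`i(M) = i(L') − dim_k(L'/M)`. -/
theorem isDiscrete_and_index_of_sandwich {k V : Type*} [Field k] [AddCommGroup V] [Module k V]
    (Vplus L L' M : Submodule k V)
    (hL : IsDiscreteSubspace Vplus L) (hL' : IsDiscreteSubspace Vplus L')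
    (h1 : L ≤ M) (h2 : M ≤ L') :
    IsDiscreteSubspace Vplus M ∧
      grIndex Vplus M =
        grIndex Vplus L' - (Module.finrank k (↥L' ⧸ Submodule.comap L'.subtype M) : ℤ) := by
  have hM := hL.of_le_of_le hL' h1 h2
  exact ⟨hM, grIndex_eq_sub_finrank_of_le hM hL' h2⟩
end

section
/- Let A be a commutative ring and f a unit of the ring A((z)) of formal Laurent series. Then the function Spec A → ℤ sending a point s to v_s(f), the order of the induced nonzero Laurent series f_s ∈ k(s)((z)), is locally constant with respect to the Zariski topology on Spec A. -/
/-!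
Write `f_s` for the image of `f` over the domain `A ⧸ s`; it has the same order as over `k(s)`.
The coefficient of `f` in degree `v_s(f)` lies outside `s`, hence outside every prime of a basic
open neighbourhood of `s`, so `s ↦ v_s(f)` can only drop near `s`; the same holds for `f⁻¹`.
Since `f_s f⁻¹_s = 1` over a domain, `v_s(f) + v_s(f⁻¹) = 0`, so neither can actually drop.
-/

open Topology

theorem IsLocallyConstant.of_eventually_le_of_add_eq {X G : Type*} [TopologicalSpace X]
    [Add G] [PartialOrder G] [AddLeftStrictMono G] [AddRightStrictMono G] {g h : X → G} {c : G}
    (hg : ∀ s, ∀ᶠ t in 𝓝 s, g t ≤ g s) (hh : ∀ s, ∀ᶠ t in 𝓝 s, h t ≤ h s)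
    (hgh : ∀ t, g t + h t = c) : IsLocallyConstant g := by
  refine (IsLocallyConstant.iff_eventually_eq g).2 fun s => ?_
  filter_upwards [hg s, hh s] with t hgt hht
  exact ((add_eq_add_iff_eq_and_eq hgt hht).1 ((hgh t).trans (hgh s).symm)).1

namespace HahnSeries

variable {Γ : Type*}

theorem order_add_order_eq_zero_of_mul_eq_one [AddCommMonoid Γ] [LinearOrder Γ]
    [IsOrderedCancelAddMonoid Γ] {R : Type*} [Semiring R] [NoZeroDivisors R] [Nontrivial R]
    {x y : HahnSeries Γ R} (hxy : x * y = 1) : x.order + y.order = 0 := by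
  rw [← order_mul (left_ne_zero_of_mul_eq_one hxy) (right_ne_zero_of_mul_eq_one hxy), hxy,
    order_one]

theorem map_units_mul_map_inv [AddCommMonoid Γ] [PartialOrder Γ] [IsOrderedCancelAddMonoid Γ]
    {R S : Type*} [Semiring R] [Semiring S] (φ : R →+* S) (u : (HahnSeries Γ R)ˣ) :
    (u : HahnSeries Γ R).map φ * (↑u⁻¹ : HahnSeries Γ R).map φ = 1 := by
  have map_nonUnital (x : HahnSeries Γ R) : x.map (φ : R →ₙ+* S) = x.map φ := rfl
  have map_monoidWithZero (x : HahnSeries Γ R) : x.map φ.toMonoidWithZeroHom = x.map φ := rfl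
  rw [← map_nonUnital, ← map_nonUnital, ← HahnSeries.map_mul, u.mul_inv, map_nonUnital,
    ← map_monoidWithZero, HahnSeries.map_one]

variable {A : Type*} [CommRing A]

theorem map_quotientMk_coeff_ne_zero_iff [PartialOrder Γ] (x : HahnSeries Γ A) (p : Ideal A)
    (i : Γ) : (x.map (Ideal.Quotient.mk p)).coeff i ≠ 0 ↔ x.coeff i ∉ p := by
  rw [map_coeff, ne_eq, Ideal.Quotient.eq_zero_iff_mem]

theorem eventually_order_map_quotientMk_le [Zero Γ] [LinearOrder Γ] (x : HahnSeries Γ A)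
    {s : PrimeSpectrum A} (hx : x.map (Ideal.Quotient.mk s.asIdeal) ≠ 0) :
    ∀ᶠ t in 𝓝 s, (x.map (Ideal.Quotient.mk t.asIdeal)).order ≤
      (x.map (Ideal.Quotient.mk s.asIdeal)).order := by
  set n := (x.map (Ideal.Quotient.mk s.asIdeal)).order
  have hs : s ∈ PrimeSpectrum.basicOpen (x.coeff n) :=
    (map_quotientMk_coeff_ne_zero_iff x _ n).1 (coeff_order_eq_zero.not.2 hx)
  filter_upwards [PrimeSpectrum.isOpen_basicOpen.mem_nhds hs] with t ht
  exact order_le_of_coeff_ne_zero ((map_quotientMk_coeff_ne_zero_iff x _ n).2 ht)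

end HahnSeries

theorem LaurentSeries.sInf_support_eq_order {R : Type*} [Zero R] {x : LaurentSeries R}
    (hx : x ≠ 0) : sInf x.support = x.order :=
  IsLeast.csInf_eq
    ⟨HahnSeries.coeff_order_eq_zero.not.2 hx, fun _ => HahnSeries.order_le_of_coeff_ne_zero⟩

/-- Let `f` be a unit of the ring `A((z))` of formal Laurent series over a commutative ring
`A`. The function sending a point `s` of `Spec A` to `v_s(f)`, the order of the induced
(nonzero) Laurent series over the residue field `k(s)` — i.e. the least integer `i` such
that the `i`-th coefficient of `f` does not vanish in `k(s)`, equivalently does not belong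
to the prime ideal `s` — is locally constant on `Spec A` with its Zariski topology. -/
theorem locallyConstant_order_of_unit (A : Type*) [CommRing A] (f : (LaurentSeries A)ˣ) :
    IsLocallyConstant (fun s : PrimeSpectrum A =>
      sInf {i : ℤ | (f : LaurentSeries A).coeff i ∉ s.asIdeal}) := by
  have hmul (s : PrimeSpectrum A) :=
    HahnSeries.map_units_mul_map_inv (Ideal.Quotient.mk s.asIdeal) f
  have hv : (fun s : PrimeSpectrum A =>
        sInf {i : ℤ | (f : LaurentSeries A).coeff i ∉ s.asIdeal})
      = fun s => ((f : LaurentSeries A).map (Ideal.Quotient.mk s.asIdeal)).order := by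
    funext s
    rw [← LaurentSeries.sInf_support_eq_order (left_ne_zero_of_mul_eq_one (hmul s))]
    congr 1
    ext i
    exact (HahnSeries.map_quotientMk_coeff_ne_zero_iff _ _ i).symm
  rw [hv]
  exact .of_eventually_le_of_add_eq
    (fun s => HahnSeries.eventually_order_map_quotientMk_le _
      (left_ne_zero_of_mul_eq_one (hmul s)))
    (fun s => HahnSeries.eventually_order_map_quotientMk_le _
      (right_ne_zero_of_mul_eq_one (hmul s)))
    (fun s => HahnSeries.order_add_order_eq_zero_of_mul_eq_one (hmul s))
end

section
/- Let A be a nontrivial commutative ring whose nilradical is a prime ideal (equivalently, Spec A is irreducible). An element f ∈ A((z)) is a unit if and only if there exists an integer n such that the coefficient a_n of z^n in f is a unit of A and the coefficients a_i are nilpotent for all i < n; in that case v_s(f) = n for every point s of Spec A. -/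
/-!
Since the nilradical `N` is prime, `A ⧸ N` is a domain, over which a Laurent series is a unit
exactly when its leading coefficient is; as `N` lies in the Jacobson radical, units of `A ⧸ N`
lift to units of `A`. Conversely, if `aₙ` is a unit and the `aᵢ` (`i < n`) are nilpotent, then
`f` is the sum of `∑_{i ≥ n} aᵢ zⁱ`, a unit because its leading coefficient is, and of finitely
many nilpotent monomials. Every prime contains the nilpotent `aᵢ` and misses the unit `aₙ`,
which gives `v_s(f) = n`.
-/

namespace HahnSeries

variable {Γ R : Type*}

theorem isNilpotent_of_support_finite [AddCommMonoid Γ] [PartialOrder Γ]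
    [IsOrderedCancelAddMonoid Γ] [CommSemiring R] {x : HahnSeries Γ R}
    (hfin : x.support.Finite) (hnil : ∀ i, IsNilpotent (x.coeff i)) : IsNilpotent x := by
  have hsum : x = ∑ i ∈ hfin.toFinset, single i (x.coeff i) := by
    ext j
    classical
    simp [coeff_sum, coeff_single]
  rw [hsum]
  refine isNilpotent_sum fun i _ => ?_
  obtain ⟨k, hk⟩ := hnil i
  exact ⟨k, by rw [single_pow, hk, single_eq_zero]⟩

theorem isUnit_of_isUnit_coeff_of_forall_lt_coeff_eq_zero [AddCommGroup Γ] [LinearOrder Γ]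
    [IsOrderedAddMonoid Γ] [CommRing R] {x : HahnSeries Γ R} {n : Γ}
    (hn : IsUnit (x.coeff n)) (hlt : ∀ i < n, x.coeff i = 0) : IsUnit x := by
  nontriviality R
  have hx : x ≠ 0 := ne_zero_of_coeff_ne_zero hn.ne_zero
  have horder : x.order = n :=
    le_antisymm (order_le_of_coeff_ne_zero hn.ne_zero) ((le_order_iff_forall hx).2 hlt)
  exact isUnit_of_isUnit_leadingCoeff_AddUnitOrder (by rwa [leadingCoeff_eq, horder])
    (AddGroup.isAddUnit _)

theorem exists_isUnit_coeff_of_isUnit [AddCommGroup Γ] [LinearOrder Γ] [IsOrderedAddMonoid Γ]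
    [CommRing R] [(nilradical R).IsPrime] {x : HahnSeries Γ R} (hx : IsUnit x) :
    ∃ n, IsUnit (x.coeff n) ∧ ∀ i < n, IsNilpotent (x.coeff i) := by
  let π := Ideal.Quotient.mk (nilradical R)
  have : IsLocalHom π := isLocalHom_of_le_jacobson_bot _
    (Ideal.jacobson_bot (R := R) ▸ nilradical_le_jacobson R)
  obtain ⟨y, hxy⟩ := hx.exists_right_inv
  have hxy' : x.map π * y.map π = 1 :=
    (HahnSeries.map_mul (π : R →ₙ+* R ⧸ nilradical R)).symm.trans <| by
      rw [hxy]
      exact HahnSeries.map_one π.toMonoidWithZeroHom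
  have hu : IsUnit (x.map π) := .of_mul_eq_one _ hxy'
  rw [isUnit_iff, leadingCoeff_eq] at hu
  refine ⟨(x.map π).order, IsUnit.of_map π _ hu, fun i hi => ?_⟩
  exact mem_nilradical.1 (Ideal.Quotient.eq_zero_iff_mem.1 (coeff_eq_zero_of_lt_order hi))

theorem isLeast_setOf_coeff_notMem [LinearOrder Γ] [CommRing R] {P : Ideal R} [P.IsPrime]
    {x : HahnSeries Γ R} {n : Γ} (hn : IsUnit (x.coeff n))
    (hlt : ∀ i < n, IsNilpotent (x.coeff i)) : IsLeast {i | x.coeff i ∉ P} n :=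
  ⟨fun h => Ideal.IsPrime.ne_top ‹_› (P.eq_top_of_isUnit_mem h hn),
    fun i hi => not_lt.1 fun hlt' => hi (nilradical_le_prime P (hlt i hlt'))⟩

end HahnSeries

namespace LaurentSeries

open HahnSeries

theorem isUnit_of_isUnit_coeff_of_isNilpotent {A : Type*} [CommRing A] {f : LaurentSeries A}
    {n : ℤ} (hn : IsUnit (f.coeff n)) (hlt : ∀ i < n, IsNilpotent (f.coeff i)) : IsUnit f := by
  have hlow : IsNilpotent (truncLT n f) := by
    refine isNilpotent_of_support_finite ((Set.finite_Ico f.order n).subset fun i hi => ?_)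
      fun i => ?_
    · have hi' : i ∈ f.support ∧ i < n := by simpa [support_truncLT] using hi
      exact ⟨order_le_of_coeff_ne_zero hi'.1, hi'.2⟩
    · rw [HahnSeries.coeff_truncLT]
      split_ifs with hi
      exacts [hlt i hi, IsNilpotent.zero]
  have hhigh : IsUnit (f - truncLT n f) := by
    refine isUnit_of_isUnit_coeff_of_forall_lt_coeff_eq_zero (n := n) ?_ fun i hi => ?_
    · rwa [coeff_sub, coeff_truncLT_of_le le_rfl, sub_zero]
    · rw [coeff_sub, coeff_truncLT_of_lt hi, sub_self]
  rw [← sub_add_cancel f (truncLT n f)]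
  exact hlow.isUnit_add_left_of_commute hhigh (Commute.all _ _)

end LaurentSeries

open HahnSeries LaurentSeries in
theorem isUnit_laurentSeries_iff_of_irreducible_general (A : Type*) [CommRing A]
    (hnil : (nilradical A).IsPrime) (f : LaurentSeries A) :
    (IsUnit f ↔ ∃ n : ℤ, IsUnit (f.coeff n) ∧ ∀ i < n, IsNilpotent (f.coeff i)) ∧
    (∀ n : ℤ, IsUnit (f.coeff n) → (∀ i < n, IsNilpotent (f.coeff i)) →
      ∀ s : PrimeSpectrum A, sInf {i : ℤ | f.coeff i ∉ s.asIdeal} = n) :=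
  ⟨⟨exists_isUnit_coeff_of_isUnit,
      fun ⟨_, hn, hlt⟩ => isUnit_of_isUnit_coeff_of_isNilpotent hn hlt⟩,
    fun _ hn hlt _ => (isLeast_setOf_coeff_notMem hn hlt).csInf_eq⟩

/-- Let `A` be a nontrivial commutative ring whose nilradical is prime (i.e. `Spec A` is
irreducible). A Laurent series `f ∈ A((z))` is a unit if and only if there is an integer `n`
such that the coefficient of `z^n` is a unit of `A` and all coefficients of `z^i` for `i < n`
are nilpotent; moreover for such an `n` the order `v_s(f)` of the image of `f` in `k(s)((z))`
— i.e. the least `i` whose coefficient does not lie in the prime ideal `s` — equals `n` at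
every point `s` of `Spec A`. -/
theorem isUnit_laurentSeries_iff_of_irreducible (A : Type*) [CommRing A] [Nontrivial A]
    (hnil : (nilradical A).IsPrime) (f : LaurentSeries A) :
    (IsUnit f ↔ ∃ n : ℤ, IsUnit (f.coeff n) ∧ ∀ i < n, IsNilpotent (f.coeff i)) ∧
    (∀ n : ℤ, IsUnit (f.coeff n) → (∀ i < n, IsNilpotent (f.coeff i)) →
      ∀ s : PrimeSpectrum A, sInf {i : ℤ | f.coeff i ∉ s.asIdeal} = n) :=
  isUnit_laurentSeries_iff_of_irreducible_general A hnil f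
end

section
/- Let A be a commutative ring and f = 1 + b_1 z⁻¹ + … + b_m z⁻ᵐ ∈ A((z)) with all b_i nilpotent. Then there exists a unique finitely supported sequence (a_i)_{i ≥ 1} of nilpotent elements of A such that f = Π_{i ≥ 1} (1 − a_i z⁻ⁱ) (a finite product). (This says that the 'exponential' map of the formal group Γ₋ in positive characteristic, (a_i) ↦ Π(1 − a_i z⁻ⁱ), is a bijection onto Γ₋(A).) -/
/-!
Substituting `X = z⁻¹` turns `f` into a polynomial `p` with constant term `1`. Comparing
coefficients of `X ^ n` in `p = ∏ (1 - a_i X^i)` gives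
`a_n = [X^n] ∏_{i<n} (1 - a_i X^i) - [X^n] p`, so the `a_i` are unique and are determined
recursively. For finiteness let `I` be the ideal generated by the `b_i` and `m ≥ deg p`. Since
`k ↦ ⌈k/m⌉` is subadditive, the polynomials whose `k`-th coefficient lies in `I ^ ⌈k/m⌉` form a
subring; it contains `p` and, inductively, every factor `1 - a_i X^i`. As `I ^ N = 0` for some
`N`, the `a_n` and the coefficients of both sides vanish in degrees `≥ m N`.
-/

open Polynomial Finset

namespace Nat

lemma ceilDiv_add_le (i j m : ℕ) : (i + j) ⌈/⌉ m ≤ i ⌈/⌉ m + j ⌈/⌉ m := by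
  rcases Nat.eq_zero_or_pos m with rfl | hm
  · simp
  rw [ceilDiv_le_iff_le_mul hm, mul_add]
  exact add_le_add (le_smul_ceilDiv hm) (le_smul_ceilDiv hm)

lemma ceilDiv_pos {n m : ℕ} (hn : 0 < n) (hm : 0 < m) : 0 < n ⌈/⌉ m :=
  lt_of_not_ge fun h => by
    have := (ceilDiv_le_iff_le_mul hm).mp h
    omega

end Nat

namespace Polynomial

variable {A : Type*} [CommRing A]

section Truncation

lemma X_pow_dvd_prod_Ico_sub_one (c : ℕ → A) (n M : ℕ) :
    X ^ n ∣ ∏ i ∈ Ico n M, (1 - C (c i) * X ^ i) - 1 := by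
  rw [← Ideal.mem_span_singleton, ← Ideal.Quotient.eq, map_prod, map_one]
  refine prod_eq_one fun i hi => ?_
  rw [map_sub, map_one, sub_eq_self, Ideal.Quotient.eq_zero_iff_mem, Ideal.mem_span_singleton]
  exact dvd_mul_of_dvd_right (pow_dvd_pow X (mem_Ico.mp hi).1) _

lemma coeff_prod_range_eq_of_lt (c : ℕ → A) {n M : ℕ} (h : n < M) :
    (∏ i ∈ range M, (1 - C (c i) * X ^ i)).coeff n =
      (∏ i ∈ range (n + 1), (1 - C (c i) * X ^ i)).coeff n := by
  obtain ⟨r, hr⟩ := X_pow_dvd_prod_Ico_sub_one c (n + 1) M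
  rw [← prod_range_mul_prod_Ico _ h, ← sub_add_cancel (∏ i ∈ Ico (n + 1) M, _) 1, hr,
    mul_add, mul_one, coeff_add, mul_left_comm, coeff_X_pow_mul', if_neg (by omega), zero_add]

lemma coeff_zero_prod_one_sub_C_mul_X_pow {c : ℕ → A} (hc : c 0 = 0) (s : Finset ℕ) :
    (∏ i ∈ s, (1 - C (c i) * X ^ i)).coeff 0 = 1 := by
  rw [coeff_zero_eq_eval_zero, eval_prod]
  refine prod_eq_one fun i _ => ?_
  rcases i with _ | i <;> simp [hc]

lemma coeff_prod_range_eq_sub {c : ℕ → A} (hc : c 0 = 0) {n M : ℕ} (h : n < M) :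
    (∏ i ∈ range M, (1 - C (c i) * X ^ i)).coeff n =
      (∏ i ∈ range n, (1 - C (c i) * X ^ i)).coeff n - c n := by
  rw [coeff_prod_range_eq_of_lt c h, prod_range_succ, mul_sub, mul_one, coeff_sub, ← mul_assoc,
    coeff_mul_X_pow', if_pos le_rfl, Nat.sub_self, coeff_mul_C,
    coeff_zero_prod_one_sub_C_mul_X_pow hc, one_mul]

lemma prod_support_eq_prod_range (a : ℕ →₀ A) {M : ℕ} (h : a.support ⊆ range M) :
    ∏ i ∈ a.support, (1 - C (a i) * X ^ i) = ∏ i ∈ range M, (1 - C (a i) * X ^ i) :=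
  prod_subset h fun i _ hi => by simp [Finsupp.notMem_support_iff.mp hi]

end Truncation

section Uniqueness

lemma eq_of_prod_range_eq {c d : ℕ → A} (hc : c 0 = 0) (hd : d 0 = 0) {M : ℕ}
    (h : ∏ i ∈ range M, (1 - C (c i) * X ^ i) = ∏ i ∈ range M, (1 - C (d i) * X ^ i)) :
    ∀ n < M, c n = d n := by
  intro n
  induction n using Nat.strong_induction_on with
  | _ n ih =>
    intro hn
    have hlow : ∏ i ∈ range n, (1 - C (c i) * X ^ i) = ∏ i ∈ range n, (1 - C (d i) * X ^ i) :=
      prod_congr rfl fun i hi => by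
        have hi : i < n := mem_range.mp hi
        rw [ih i hi (by omega)]
    have hcn := coeff_prod_range_eq_sub hc hn
    rw [h, hlow, coeff_prod_range_eq_sub hd hn] at hcn
    exact (sub_right_injective hcn).symm

lemma finsupp_eq_of_prod_support_eq {u v : ℕ →₀ A} (hu : u 0 = 0) (hv : v 0 = 0)
    (h : ∏ i ∈ u.support, (1 - C (u i) * X ^ i) = ∏ i ∈ v.support, (1 - C (v i) * X ^ i)) :
    u = v := by
  obtain ⟨M, hM⟩ := exists_nat_subset_range (u.support ∪ v.support)
  rw [prod_support_eq_prod_range u (subset_union_left.trans hM),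
    prod_support_eq_prod_range v (subset_union_right.trans hM)] at h
  ext n
  by_cases hn : n < M
  · exact eq_of_prod_range_eq hu hv h n hn
  · have hn' : n ∉ u.support ∪ v.support := fun h' => hn (mem_range.mp (hM h'))
    rw [mem_union, not_or, Finsupp.notMem_support_iff, Finsupp.notMem_support_iff] at hn'
    rw [hn'.1, hn'.2]

end Uniqueness

section Filtration

def ceilDivFiltration (I : Ideal A) (m : ℕ) : Subring A[X] where
  carrier := {p | ∀ k, p.coeff k ∈ I ^ (k ⌈/⌉ m)}
  mul_mem' {p q} hp hq k := by
    rw [coeff_mul]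
    refine sum_mem fun x hx => ?_
    rw [← mem_antidiagonal.mp hx]
    exact Ideal.pow_le_pow_right (Nat.ceilDiv_add_le _ _ m)
      (pow_add I _ _ ▸ Ideal.mul_mem_mul (hp x.1) (hq x.2))
  one_mem' k := by
    rw [coeff_one]
    split_ifs with h
    · simp [h]
    · exact zero_mem _
  add_mem' hp hq k := by
    rw [coeff_add]
    exact add_mem (hp k) (hq k)
  zero_mem' k := by simp
  neg_mem' hp k := by
    rw [coeff_neg]
    exact neg_mem (hp k)

variable {I : Ideal A} {m : ℕ}

lemma mem_ceilDivFiltration {p : A[X]} :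
    p ∈ ceilDivFiltration I m ↔ ∀ k, p.coeff k ∈ I ^ (k ⌈/⌉ m) := Iff.rfl

lemma C_mul_X_pow_mem_ceilDivFiltration {a : A} {i : ℕ} (ha : a ∈ I ^ (i ⌈/⌉ m)) :
    C a * X ^ i ∈ ceilDivFiltration I m := mem_ceilDivFiltration.mpr fun k => by
  rw [coeff_C_mul_X_pow]
  split_ifs with h
  · exact h ▸ ha
  · exact zero_mem _

lemma prod_one_sub_C_mul_X_pow_mem_ceilDivFiltration {c : ℕ → A} (s : Finset ℕ)
    (hc : ∀ i ∈ s, c i ∈ I ^ (i ⌈/⌉ m)) :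
    ∏ i ∈ s, (1 - C (c i) * X ^ i) ∈ ceilDivFiltration I m :=
  prod_mem fun i hi => sub_mem (one_mem _) (C_mul_X_pow_mem_ceilDivFiltration (hc i hi))

lemma eq_zero_of_mem_pow_ceilDiv {N n : ℕ} (hN : I ^ N = ⊥) (hm : 0 < m) (hn : m * N ≤ n)
    {x : A} (hx : x ∈ I ^ (n ⌈/⌉ m)) : x = 0 := by
  rw [← Ideal.mem_bot, ← hN]
  exact Ideal.pow_le_pow_right (((le_floorDiv_iff_mul_le hm).2 hn).trans floorDiv_le_ceilDiv) hx

end Filtration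

section Existence

noncomputable def factorSeq (p : A[X]) (n : ℕ) : A :=
  (∏ i : Fin n, (1 - C (factorSeq p i) * X ^ (i : ℕ))).coeff n - p.coeff n
termination_by n
decreasing_by exact i.isLt

lemma factorSeq_eq (p : A[X]) (n : ℕ) :
    factorSeq p n = (∏ i ∈ range n, (1 - C (factorSeq p i) * X ^ i)).coeff n - p.coeff n := by
  rw [factorSeq, Fin.prod_univ_eq_prod_range (fun i => 1 - C (factorSeq p i) * X ^ i)]

variable {p : A[X]}

lemma factorSeq_zero (hp : p.coeff 0 = 1) : factorSeq p 0 = 0 := by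
  rw [factorSeq_eq]
  simp [hp]

lemma coeff_prod_range_factorSeq (hp : p.coeff 0 = 1) {n M : ℕ} (h : n < M) :
    (∏ i ∈ range M, (1 - C (factorSeq p i) * X ^ i)).coeff n = p.coeff n := by
  rw [coeff_prod_range_eq_sub (factorSeq_zero hp) h, factorSeq_eq, sub_sub_cancel]

lemma factorSeq_mem {I : Ideal A} {m : ℕ} (hp : p ∈ ceilDivFiltration I m) (n : ℕ) :
    factorSeq p n ∈ I ^ (n ⌈/⌉ m) := by
  induction n using Nat.strong_induction_on with
  | _ n ih =>
    rw [factorSeq_eq]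
    refine sub_mem ?_ (mem_ceilDivFiltration.mp hp n)
    exact mem_ceilDivFiltration.mp
      (prod_one_sub_C_mul_X_pow_mem_ceilDivFiltration _ fun i hi => ih i (mem_range.mp hi)) n

theorem exists_finsupp_eq_prod {I : Ideal A} (hI : IsNilpotent I) {m : ℕ} (hm : 0 < m)
    (hp0 : p.coeff 0 = 1) (hp : p ∈ ceilDivFiltration I m) :
    ∃ a : ℕ →₀ A, (∀ i, IsNilpotent (a i)) ∧ a 0 = 0 ∧
      p = ∏ i ∈ a.support, (1 - C (a i) * X ^ i) := by
  obtain ⟨N, hN⟩ := hI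
  rw [Ideal.zero_eq_bot] at hN
  have hvanish : ∀ n, m * N ≤ n → factorSeq p n = 0 := fun n hn =>
    eq_zero_of_mem_pow_ceilDiv hN hm hn (factorSeq_mem hp n)
  let a : ℕ →₀ A := Finsupp.onFinset (range (m * N)) (factorSeq p) fun n hn =>
    mem_range.mpr (not_le.mp fun h => hn (hvanish n h))
  refine ⟨a, fun n => ?_, factorSeq_zero hp0, ?_⟩
  · have hI : factorSeq p n ∈ I := by
      rcases Nat.eq_zero_or_pos n with rfl | hn
      · rw [factorSeq_zero hp0]
        exact zero_mem I
      · exact Ideal.pow_le_self (Nat.ceilDiv_pos hn hm).ne' (factorSeq_mem hp n)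
    exact ⟨N, by rw [← Ideal.mem_bot, ← hN]; exact Ideal.pow_mem_pow hI N⟩
  rw [prod_support_eq_prod_range a Finsupp.support_onFinset_subset]
  change p = ∏ i ∈ range (m * N), (1 - C (factorSeq p i) * X ^ i)
  ext n
  by_cases hn : n < m * N
  · exact (coeff_prod_range_factorSeq hp0 hn).symm
  · have hprod := prod_one_sub_C_mul_X_pow_mem_ceilDivFiltration (range (m * N))
      fun i _ => factorSeq_mem hp i
    rw [eq_zero_of_mem_pow_ceilDiv hN hm (not_lt.mp hn) (mem_ceilDivFiltration.mp hp n),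
      eq_zero_of_mem_pow_ceilDiv hN hm (not_lt.mp hn) (mem_ceilDivFiltration.mp hprod n)]

end Existence

section LaurentSeries

noncomputable def toLaurentSeriesInv : A[X] →+* LaurentSeries A :=
  eval₂RingHom HahnSeries.C (HahnSeries.single (-1) 1)

lemma toLaurentSeriesInv_C_mul_X_pow (a : A) (i : ℕ) :
    toLaurentSeriesInv (C a * X ^ i) = HahnSeries.single (-(i : ℤ)) a := by
  rw [toLaurentSeriesInv, coe_eval₂RingHom, eval₂_mul, eval₂_C, eval₂_X_pow, HahnSeries.single_pow,
    HahnSeries.C_apply, HahnSeries.single_mul_single, one_pow, mul_one, zero_add, nsmul_eq_mul,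
    mul_neg_one]

lemma coeff_toLaurentSeriesInv (p : A[X]) (n : ℕ) :
    (toLaurentSeriesInv p).coeff (-(n : ℤ)) = p.coeff n := by
  induction p using Polynomial.induction_on' with
  | add p q hp hq => rw [map_add, HahnSeries.coeff_add, hp, hq, coeff_add]
  | monomial i a =>
    rw [← C_mul_X_pow_eq_monomial, toLaurentSeriesInv_C_mul_X_pow, HahnSeries.coeff_single,
      coeff_C_mul_X_pow, neg_inj, Nat.cast_inj]
    congr

lemma toLaurentSeriesInv_injective : Function.Injective (toLaurentSeriesInv (A := A)) :=
  fun p q h => ext fun n => by rw [← coeff_toLaurentSeriesInv, h, coeff_toLaurentSeriesInv]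

lemma toLaurentSeriesInv_prod (c : ℕ → A) (s : Finset ℕ) :
    toLaurentSeriesInv (∏ i ∈ s, (1 - C (c i) * X ^ i)) =
      ∏ i ∈ s, (1 - HahnSeries.single (-(i : ℤ)) (c i)) := by
  simp only [map_prod, map_sub, map_one, toLaurentSeriesInv_C_mul_X_pow]

end LaurentSeries

end Polynomial

/-- Let `A` be a commutative ring and `f = 1 + b_1 z⁻¹ + ⋯ + b_m z⁻ᵐ ∈ A((z))` with all
`b_i` nilpotent. Then there is a unique finitely supported sequence `(a_i)_{i ≥ 1}` of
nilpotent elements of `A` such that `f = Π_{i ≥ 1} (1 − a_i z⁻ⁱ)` (a finite product): the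
exponential map of `Γ₋` in positive characteristic is bijective onto `Γ₋(A)`. -/
theorem gammaMinus_unique_factorization (A : Type*) [CommRing A]
    (m : ℕ) (b : ℕ → A) (hb : ∀ i, IsNilpotent (b i))
    (f : LaurentSeries A)
    (hf : f = 1 + ∑ i ∈ Finset.Icc 1 m, HahnSeries.single (-(i : ℤ)) (b i)) :
    ∃! a : ℕ →₀ A, (∀ i, IsNilpotent (a i)) ∧ a 0 = 0 ∧
      f = ∏ i ∈ a.support, (1 - HahnSeries.single (-(i : ℤ)) (a i)) := by
  classical
  set p : A[X] := 1 + ∑ i ∈ Icc 1 m, C (b i) * X ^ i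
  have hfp : f = toLaurentSeriesInv p := by
    simp only [hf, p, map_add, map_one, map_sum, toLaurentSeriesInv_C_mul_X_pow]
  set I : Ideal A := Ideal.span ((Icc 1 m).image b)
  have hI : IsNilpotent I := by
    refine (Ideal.FG.isNilpotent_iff_le_nilradical (Submodule.fg_span (finite_toSet _))).mpr
      (Ideal.span_le.mpr fun x hx => ?_)
    obtain ⟨i, -, rfl⟩ := mem_image.mp hx
    exact hb i
  have hp0 : p.coeff 0 = 1 := by
    simp [p]
  have hp : p ∈ ceilDivFiltration I (m + 1) := by
    refine add_mem (one_mem _) (sum_mem fun i hi => C_mul_X_pow_mem_ceilDivFiltration ?_)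
    refine Ideal.pow_le_pow_right ((ceilDiv_le_iff_le_mul m.succ_pos).mpr ?_)
      (by rw [pow_one]; exact Ideal.subset_span (mem_image_of_mem b hi))
    have := (mem_Icc.mp hi).2
    omega
  obtain ⟨a, ha, ha0, hpa⟩ := exists_finsupp_eq_prod hI m.succ_pos hp0 hp
  refine ⟨a, ⟨ha, ha0, by rw [hfp, hpa, toLaurentSeriesInv_prod]⟩, ?_⟩
  rintro v ⟨-, hv0, hv⟩
  refine finsupp_eq_of_prod_support_eq hv0 ha0 (toLaurentSeriesInv_injective ?_)
  rw [toLaurentSeriesInv_prod, toLaurentSeriesInv_prod, ← hv, hfp, hpa, toLaurentSeriesInv_prod]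
end

section
/- Let A be a commutative ring and f ∈ A[[z]] a power series with constant term 1. Then there exists a unique sequence (a_i)_{i ≥ 1} of elements of A such that f = Π_{i ≥ 1} (1 − a_i z^i), the infinite product converging z-adically; equivalently, for every n ≥ 1, f ≡ Π_{i=1}^{n} (1 − a_i z^i) modulo z^{n+1}. (This says the map (a_i) ↦ Π(1 − a_i z^i), the exponential of Γ₊ in positive characteristic, is a bijection from A^∞ onto Γ₊(A).) -/
/-!
Multiplying by `1 - c X^m` leaves the coefficients below `X^m` unchanged and subtracts `c` from
the coefficient of `X^m` of a series with constant term `1`. Hence the coefficient of `X^(n+1)` in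
`f` forces `a (n+1)` once `a 1, …, a n` are known, which gives both the recursive construction of
the sequence and its uniqueness.
-/

open Finset

namespace PowerSeries

variable {A : Type*} [CommRing A]

theorem coeff_mul_one_sub_C_mul_X_pow_of_lt (p : A⟦X⟧) (c : A) {k m : ℕ} (hk : k < m) :
    coeff k (p * (1 - C c * X ^ m)) = coeff k p := by
  rw [mul_sub, mul_one, map_sub, ← mul_assoc, coeff_mul_X_pow', if_neg (by omega), sub_zero]

theorem coeff_mul_one_sub_C_mul_X_pow_self (p : A⟦X⟧) (c : A) (m : ℕ) :
    coeff m (p * (1 - C c * X ^ m)) = coeff m p - c * constantCoeff p := by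
  rw [mul_sub, mul_one, map_sub, ← mul_assoc, coeff_mul_X_pow', if_pos le_rfl, Nat.sub_self,
    coeff_zero_eq_constantCoeff, map_mul, constantCoeff_C, mul_comm]

noncomputable def partialProd (a : ℕ → A) (n : ℕ) : A⟦X⟧ :=
  ∏ i ∈ Icc 1 n, (1 - C (a i) * X ^ i)

theorem partialProd_zero (a : ℕ → A) : partialProd a 0 = 1 := rfl

theorem partialProd_succ (a : ℕ → A) (n : ℕ) :
    partialProd a (n + 1) = partialProd a n * (1 - C (a (n + 1)) * X ^ (n + 1)) :=
  prod_Icc_succ_top (by omega) _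

theorem partialProd_congr {a b : ℕ → A} {n : ℕ} (h : ∀ i ≤ n, a i = b i) :
    partialProd a n = partialProd b n :=
  prod_congr rfl fun i hi => by rw [h i (mem_Icc.mp hi).2]

theorem constantCoeff_partialProd (a : ℕ → A) (n : ℕ) : constantCoeff (partialProd a n) = 1 := by
  induction n with
  | zero => simp [partialProd_zero]
  | succ n ih => simp [partialProd_succ, ih]

theorem coeff_partialProd_of_le (a : ℕ → A) {k n : ℕ} (h : k ≤ n) :
    coeff k (partialProd a n) = coeff k (partialProd a k) := by
  induction n, h using Nat.le_induction with
  | base => rfl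
  | succ n _ ih => rw [partialProd_succ, coeff_mul_one_sub_C_mul_X_pow_of_lt _ _ (by omega), ih]

theorem coeff_partialProd_succ (a : ℕ → A) (n : ℕ) :
    coeff (n + 1) (partialProd a (n + 1)) = coeff (n + 1) (partialProd a n) - a (n + 1) := by
  rw [partialProd_succ, coeff_mul_one_sub_C_mul_X_pow_self, constantCoeff_partialProd, mul_one]

theorem trunc_eq_trunc_partialProd_iff (f : A⟦X⟧) (a : ℕ → A) :
    (∀ n, trunc (n + 1) f = trunc (n + 1) (partialProd a n)) ↔
      ∀ n, coeff n f = coeff n (partialProd a n) := by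
  refine ⟨fun h n => ?_, fun h n => Polynomial.ext fun k => ?_⟩
  · simpa [coeff_trunc] using congrArg (Polynomial.coeff · n) (h n)
  · rw [coeff_trunc, coeff_trunc]
    split_ifs with hk
    · rw [coeff_partialProd_of_le a (Nat.lt_succ_iff.mp hk), h k]
    · rfl

theorem coeff_eq_coeff_partialProd_iff {f : A⟦X⟧} (hf : constantCoeff f = 1) (a : ℕ → A) :
    (∀ n, coeff n f = coeff n (partialProd a n)) ↔
      ∀ n, a (n + 1) = coeff (n + 1) (partialProd a n) - coeff (n + 1) f := by
  refine ⟨fun h n => ?_, fun h n => ?_⟩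
  · rw [h, coeff_partialProd_succ]
    ring
  · cases n with
    | zero => rw [coeff_zero_eq_constantCoeff_apply, coeff_zero_eq_constantCoeff_apply, hf,
        constantCoeff_partialProd]
    | succ n =>
      rw [coeff_partialProd_succ, h n]
      ring

/-- `(a n, partialProd a n)` for the sequence `a` solving the recursion of
`coeff_eq_coeff_partialProd_iff`; carrying the product along makes the recursion structural. -/
noncomputable def factorStep (f : A⟦X⟧) : ℕ → A × A⟦X⟧
  | 0 => (0, 1)
  | n + 1 =>
    let c := coeff (n + 1) (factorStep f n).2 - coeff (n + 1) f
    (c, (factorStep f n).2 * (1 - C c * X ^ (n + 1)))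

noncomputable def factorCoeff (f : A⟦X⟧) (n : ℕ) : A := (factorStep f n).1

theorem factorCoeff_zero (f : A⟦X⟧) : factorCoeff f 0 = 0 := rfl

theorem snd_factorStep (f : A⟦X⟧) (n : ℕ) : (factorStep f n).2 = partialProd (factorCoeff f) n := by
  induction n with
  | zero => rfl
  | succ n ih => rw [partialProd_succ, ← ih]; rfl

theorem factorCoeff_succ (f : A⟦X⟧) (n : ℕ) :
    factorCoeff f (n + 1) =
      coeff (n + 1) (partialProd (factorCoeff f) n) - coeff (n + 1) f := by
  rw [← snd_factorStep]; rfl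

theorem eq_factorCoeff_of_succ {f : A⟦X⟧} {a : ℕ → A} (h0 : a 0 = 0)
    (h : ∀ n, a (n + 1) = coeff (n + 1) (partialProd a n) - coeff (n + 1) f) :
    a = factorCoeff f := by
  funext n
  induction n using Nat.strong_induction_on with
  | _ n ih =>
    cases n with
    | zero => rw [h0, factorCoeff_zero]
    | succ n =>
      rw [h, factorCoeff_succ, partialProd_congr fun i hi => ih i (by omega)]

end PowerSeries

/-- Let `A` be a commutative ring and `f ∈ A[[z]]` a power series with constant term `1`.
There exists a unique sequence `(a_i)_{i ≥ 1}` of elements of `A` (encoded as `a : ℕ → A`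
with `a 0 = 0`) such that `f = Π_{i ≥ 1} (1 − a_i z^i)`, the infinite product converging
`z`-adically: for every `n`, `f ≡ Π_{i=1}^{n} (1 − a_i z^i)` modulo `z^{n+1}`. -/
theorem powerSeries_unique_product_factorization (A : Type*) [CommRing A]
    (f : PowerSeries A) (hf : PowerSeries.constantCoeff f = 1) :
    ∃! a : ℕ → A, a 0 = 0 ∧ ∀ n : ℕ,
      PowerSeries.trunc (n + 1) f =
        PowerSeries.trunc (n + 1)
          (∏ i ∈ Finset.Icc 1 n, (1 - PowerSeries.C (a i) * (PowerSeries.X : PowerSeries A) ^ i)) := by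
  have characterization (a : ℕ → A) :
      (∀ n : ℕ, PowerSeries.trunc (n + 1) f =
          PowerSeries.trunc (n + 1) (PowerSeries.partialProd a n)) ↔
        ∀ n, a (n + 1) = PowerSeries.coeff (n + 1) (PowerSeries.partialProd a n) -
          PowerSeries.coeff (n + 1) f :=
    (PowerSeries.trunc_eq_trunc_partialProd_iff f a).trans
      (PowerSeries.coeff_eq_coeff_partialProd_iff hf a)
  refine ⟨PowerSeries.factorCoeff f,
    ⟨PowerSeries.factorCoeff_zero f, (characterization _).mpr (PowerSeries.factorCoeff_succ f)⟩, ?_⟩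
  rintro a ⟨h0, h⟩
  exact PowerSeries.eq_factorCoeff_of_succ h0 ((characterization a).mp h)
end
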